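/- arXiv:2208.10275 — 2 statements merged into one kernel-verified Lean document; each statement's English description precedes it below -/
import Mathlib

section
/- For every nonnegative integer n, ∑_{k=0}^{n} ((−4)^k/(k+1))·C(n,k)·H_k = (1/(4(n+1)))·((−1 + 3·(−3)^n)·H_n − 3·(−3)^n·∑_{k=1}^n 1/(k·(−3)^k) + ∑_{k=1}^n (−3)^k/k), as an identity of rational numbers. -/
/-!
Absorption, `C(n,k)/(k+1) = C(n+1,k+1)/(n+1)`, turns the left side into `R n / (n+1)` with
`R n = ∑ C(n+1,k+1) x^k H_k` at `x = -4`. Pascal's rule gives, for `T n = ∑ C(n,k) x^k H_k`, the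
recurrences `T (n+1) = (1+x) T n + ((1+x)^(n+1) - 1)/(n+1)` and `R (n+1) = R n + T (n+1)`, which
are solved in closed form by induction for arbitrary `x`; at `1 + x = -3` the closed form of
`x R n` is the right-hand side.
-/

def harmonicQ (k : ℕ) : ℚ := ∑ i ∈ Finset.Icc 1 k, (1 : ℚ) / i

open Finset

theorem harmonicQ_succ (k : ℕ) : harmonicQ (k + 1) = harmonicQ k + 1 / (k + 1) := by
  rw [harmonicQ, harmonicQ, sum_Icc_succ_top (by omega)]
  push_cast
  rfl

theorem sum_range_choose_succ_succ_mul {R : Type*} [Semiring R] (f : ℕ → R) (n : ℕ) :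
    ∑ k ∈ range (n + 2), ((n + 2).choose (k + 1) : R) * f k =
      ∑ k ∈ range (n + 1), ((n + 1).choose (k + 1) : R) * f k +
        ∑ k ∈ range (n + 2), ((n + 1).choose k : R) * f k := by
  simp only [Nat.choose_succ_succ (n + 1), Nat.cast_add, add_mul, sum_add_distrib,
    sum_range_succ _ (n + 1), Nat.choose_succ_self, Nat.cast_zero, zero_mul, add_zero]
  abel

section Field

variable {K : Type*} [Field K]

theorem cast_choose_div_add_one [CharZero K] (n k : ℕ) :
    (n.choose k : K) / (k + 1) = ((n + 1).choose (k + 1) : K) / (n + 1) := by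
  rw [div_eq_div_iff (Nat.cast_add_one_ne_zero k) (Nat.cast_add_one_ne_zero n), mul_comm]
  exact_mod_cast Nat.add_one_mul_choose_eq n k

theorem sum_pow_succ_mul_choose_div_add_one [CharZero K] (x : K) (n : ℕ) :
    ∑ k ∈ range (n + 1), x ^ (k + 1) * n.choose k / (k + 1) =
      ((1 + x) ^ (n + 1) - 1) / (n + 1) := by
  have binomial : ∑ k ∈ range (n + 1), x ^ (k + 1) * ((n + 1).choose (k + 1) : K) =
      (1 + x) ^ (n + 1) - 1 := by
    rw [add_comm 1 x, add_pow, sum_range_succ' _ (n + 1)]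
    simp
  simp_rw [mul_div_assoc, cast_choose_div_add_one, ← mul_div_assoc, ← sum_div, binomial]

theorem sum_Icc_pow_sub_div_succ (y : K) (n : ℕ) :
    ∑ j ∈ Icc 1 (n + 1), y ^ (n + 1 - j) / j =
      y * ∑ j ∈ Icc 1 n, y ^ (n - j) / j + 1 / (n + 1) := by
  rw [sum_Icc_succ_top (by omega), Nat.sub_self, pow_zero, mul_sum]
  push_cast
  congr 1
  refine sum_congr rfl fun j hj => ?_
  rw [Nat.sub_add_comm (mem_Icc.1 hj).2, pow_succ']
  ring

theorem pow_mul_sum_Icc_one_div_mul_pow {y : K} (hy : y ≠ 0) (n : ℕ) :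
    y ^ n * ∑ j ∈ Icc 1 n, 1 / (j * y ^ j) = ∑ j ∈ Icc 1 n, y ^ (n - j) / j := by
  rw [mul_sum]
  refine sum_congr rfl fun j hj => ?_
  rw [pow_sub₀ y hy (mem_Icc.1 hj).2]
  field_simp

end Field

theorem sum_choose_mul_pow_mul_harmonicQ (x : ℚ) (n : ℕ) :
    ∑ k ∈ range (n + 1), (n.choose k : ℚ) * (x ^ k * harmonicQ k) =
      (1 + x) ^ n * harmonicQ n - ∑ j ∈ Icc 1 n, (1 + x) ^ (n - j) / j := by
  induction n with
  | zero => simp [harmonicQ]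
  | succ n ih =>
    have shift : ∑ k ∈ range (n + 1), (n.choose k : ℚ) * (x ^ (k + 1) * harmonicQ (k + 1)) =
        x * ∑ k ∈ range (n + 1), (n.choose k : ℚ) * (x ^ k * harmonicQ k) +
          ∑ k ∈ range (n + 1), x ^ (k + 1) * n.choose k / (k + 1) := by
      rw [mul_sum, ← sum_add_distrib]
      refine sum_congr rfl fun k _ => ?_
      rw [harmonicQ_succ]
      ring
    rw [sum_choose_succ_mul (fun k _ => x ^ k * harmonicQ k), shift,
      sum_pow_succ_mul_choose_div_add_one, ih, sum_Icc_pow_sub_div_succ, harmonicQ_succ]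
    field_simp
    ring

theorem mul_sum_choose_succ_mul_pow_mul_harmonicQ (x : ℚ) (n : ℕ) :
    x * ∑ k ∈ range (n + 1), ((n + 1).choose (k + 1) : ℚ) * (x ^ k * harmonicQ k) =
      ((1 + x) ^ (n + 1) + 1) * harmonicQ n -
        (1 + x) * ∑ j ∈ Icc 1 n, (1 + x) ^ (n - j) / j - ∑ j ∈ Icc 1 n, (1 + x) ^ j / j := by
  induction n with
  | zero => simp [harmonicQ]
  | succ n ih =>
    rw [sum_range_choose_succ_succ_mul, mul_add, ih, sum_choose_mul_pow_mul_harmonicQ,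
      sum_Icc_pow_sub_div_succ, harmonicQ_succ, sum_Icc_succ_top (by omega : 1 ≤ n + 1)]
    push_cast
    field_simp
    ring

theorem harmonic_identity_3 (n : ℕ) :
    ∑ k ∈ Finset.range (n + 1), (-4 : ℚ) ^ k / ((k : ℚ) + 1) * (n.choose k : ℚ) * harmonicQ k =
      1 / (4 * ((n : ℚ) + 1)) *
        ((-1 + 3 * (-3 : ℚ) ^ n) * harmonicQ n -
          3 * (-3 : ℚ) ^ n * ∑ k ∈ Finset.Icc 1 n, 1 / ((k : ℚ) * (-3) ^ k) +
          ∑ k ∈ Finset.Icc 1 n, (-3 : ℚ) ^ k / (k : ℚ)) := by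
  have absorb : ∑ k ∈ range (n + 1), (-4 : ℚ) ^ k / (k + 1) * n.choose k * harmonicQ k =
      (∑ k ∈ range (n + 1), ((n + 1).choose (k + 1) : ℚ) * ((-4) ^ k * harmonicQ k)) / (n + 1) := by
    rw [sum_div]
    refine sum_congr rfl fun k _ => ?_
    rw [div_mul_eq_mul_div, mul_div_assoc, cast_choose_div_add_one]
    ring
  have closedForm := mul_sum_choose_succ_mul_pow_mul_harmonicQ (-4) n
  rw [show (1 + -4 : ℚ) = -3 by norm_num] at closedForm
  have rescale := pow_mul_sum_Icc_one_div_mul_pow (by norm_num : (-3 : ℚ) ≠ 0) n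
  rw [absorb, mul_comm 4, ← one_div_mul_one_div]
  linear_combination (-1 / 4 / ((n : ℚ) + 1)) * closedForm + 3 / 4 / ((n : ℚ) + 1) * rescale
end

section
/- Let p ≥ 5 be prime. For every k with 1 ≤ k ≤ p, ∑_{i=1}^{p-1} C(2i, i+k)/i ≡ (α(k) − 1)/k (mod p), where α(k) = 2·(−1)^k + 3·[3 divides p−k], and the sum is computed in the field of p elements. -/
open Finset

/-!
The ballot identity `k * C(2i, i+k) = i * (C(2i-1, i+k-1) - C(2i-1, i+k))` turns `k` times the
sum into `T (k-1) - T k`, where `T e = ∑ C(2i-1, i+e)` over `1 ≤ i ≤ p-1` (`sumChooseOdd`).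
Pascal's rule gives `T e + T (e+1) = F (e+1)` with `F d = ∑ C(2i, i+d)` (`sumChoose`); applying
it twice, together with `C(2p, p+d) ≡ 0 (mod p)` (Lucas) for the boundary term of the index shift,
gives `F e + F (e+1) + F (e+2) = 0`. From `F p = 0` and `F (p-1) = 1`, `F (p-m)` is the
nontrivial character mod 3 evaluated at `m`. Since `T (p-1) = 0`, descending induction on `k`
then identifies `T (k-1) - T k` with `α(k) - 1`.
-/

/-- α(k) = 2(−1)^k + 3·[3 ∣ p−k]. -/
def alphaCoef (p k : ℕ) : ℤ := 2 * (-1) ^ k + 3 * (if 3 ∣ p - k then 1 else 0)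

theorem succ_mul_choose_two_mul_add_two (a b : ℕ) :
    ((b + 1) * (2 * a + 2).choose (a + b + 2) : ℤ) =
      (a + 1) * ((2 * a + 1).choose (a + b + 1) - (2 * a + 1).choose (a + b + 2)) := by
  rcases le_or_gt b a with hba | hab
  · have h := Nat.choose_succ_right_eq (2 * a + 1) (a + b + 1)
    rw [show 2 * a + 1 - (a + b + 1) = a - b by omega] at h
    have hZ : ((2 * a + 1).choose (a + b + 2) * (a + b + 2) : ℤ) =
        (2 * a + 1).choose (a + b + 1) * (a - b) := by
      exact_mod_cast h
    rw [Nat.choose_succ_succ' (2 * a + 1) (a + b + 1), Nat.cast_add]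
    linear_combination hZ
  · simp [Nat.choose_eq_zero_of_lt, show 2 * a + 1 < a + b + 1 by omega,
      show 2 * a + 2 < a + b + 2 by omega, show 2 * a + 1 < a + b + 2 by omega]

theorem choose_add_two_add_two (n m : ℕ) :
    (n + 2).choose (m + 2) = n.choose m + 2 * n.choose (m + 1) + n.choose (m + 2) := by
  simp only [Nat.choose_succ_succ]
  ring

theorem sum_Icc_one_shift {M : Type*} [AddCommMonoid M] (f : ℕ → M) (n : ℕ) :
    ∑ i ∈ Icc 1 n, f (i + 1) + f 1 = ∑ i ∈ Icc 1 n, f i + f (n + 1) := by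
  induction n with
  | zero => simp
  | succ n ih =>
    rw [sum_Icc_succ_top (by omega), sum_Icc_succ_top (by omega), add_right_comm, ih,
      add_right_comm]

theorem natCast_ne_zero_of_pos_of_lt {p n : ℕ} (hn : 0 < n) (hnp : n < p) : (n : ZMod p) ≠ 0 := by
  rw [Ne, ZMod.natCast_eq_zero_iff]
  exact Nat.not_dvd_of_pos_of_lt hn hnp

theorem choose_two_mul_add_eq_zero (p : ℕ) [Fact p.Prime] {d : ℕ} (hd : 0 < d) (hdp : d < p) :
    ((2 * p).choose (p + d) : ZMod p) = 0 := by
  have h := Choose.choose_modEq_choose_mod_mul_choose_div_nat (p := p) (n := 2 * p) (k := p + d)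
  rw [Nat.mul_mod_left, Nat.add_mod_left, Nat.mod_eq_of_lt hdp, Nat.choose_eq_zero_of_lt hd,
    zero_mul] at h
  exact (ZMod.natCast_eq_zero_iff _ _).2 (Nat.modEq_zero_iff_dvd.1 h)

def dvdThree (m : ℕ) : ℤ := if 3 ∣ m then 1 else 0

theorem dvdThree_add_three (m : ℕ) : dvdThree (m + 3) = dvdThree m := by
  simp only [dvdThree, Nat.dvd_add_self_right]

theorem dvdThree_add_dvdThree_add_one_add_dvdThree_add_two (m : ℕ) :
    dvdThree m + dvdThree (m + 1) + dvdThree (m + 2) = 1 := by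
  unfold dvdThree
  split_ifs <;> omega

theorem alphaCoef_eq (p k : ℕ) : alphaCoef p k = 2 * (-1) ^ k + 3 * dvdThree (p - k) := rfl

section

variable (p : ℕ)

def sumChoose (d : ℕ) : ZMod p := ∑ i ∈ Icc 1 (p - 1), ((2 * i).choose (i + d) : ZMod p)

def sumChooseOdd (e : ℕ) : ZMod p := ∑ i ∈ Icc 1 (p - 1), ((2 * i - 1).choose (i + e) : ZMod p)

theorem sumChooseOdd_add_sumChooseOdd_succ (e : ℕ) :
    sumChooseOdd p e + sumChooseOdd p (e + 1) = sumChoose p (e + 1) := by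
  rw [sumChooseOdd, sumChooseOdd, sumChoose, ← sum_add_distrib]
  refine sum_congr rfl fun i hi => ?_
  obtain ⟨a, rfl⟩ : ∃ a, i = a + 1 := ⟨i - 1, by simp only [mem_Icc] at hi; omega⟩
  rw [show 2 * (a + 1) = (2 * a + 1) + 1 by ring, show a + 1 + (e + 1) = (a + 1 + e) + 1 by ring,
    Nat.choose_succ_succ', Nat.add_sub_cancel, Nat.cast_add]

theorem sumChoose_self : sumChoose p p = 0 :=
  sum_eq_zero fun i hi => by
    rw [Nat.choose_eq_zero_of_lt (by simp only [mem_Icc] at hi; omega), Nat.cast_zero]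

theorem sumChoose_sub_one (hp : 2 ≤ p) : sumChoose p (p - 1) = 1 := by
  rw [sumChoose, sum_eq_single_of_mem (p - 1) (mem_Icc.2 ⟨by omega, le_rfl⟩)]
  · rw [← two_mul, Nat.choose_self, Nat.cast_one]
  · intro i hi hne
    rw [Nat.choose_eq_zero_of_lt (by simp only [mem_Icc] at hi; omega), Nat.cast_zero]

theorem sumChooseOdd_sub_one : sumChooseOdd p (p - 1) = 0 :=
  sum_eq_zero fun i hi => by
    rw [Nat.choose_eq_zero_of_lt (by simp only [mem_Icc] at hi; omega), Nat.cast_zero]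

variable [Fact p.Prime]

theorem sumChoose_add_sumChoose_succ_add_sumChoose_add_two {e : ℕ} (he : 1 ≤ e) (hep : e + 2 ≤ p) :
    sumChoose p e + sumChoose p (e + 1) + sumChoose p (e + 2) = 0 := by
  have hpascal (i : ℕ) : ((2 * (i + 1)).choose (i + 1 + (e + 1)) : ZMod p) =
      (2 * i).choose (i + e) + 2 * (2 * i).choose (i + (e + 1)) + (2 * i).choose (i + (e + 2)) := by
    rw [show 2 * (i + 1) = 2 * i + 2 by ring, show i + 1 + (e + 1) = i + e + 2 by ring,
      choose_add_two_add_two]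
    push_cast
    rfl
  have hshift := sum_Icc_one_shift (fun j => ((2 * j).choose (j + (e + 1)) : ZMod p)) (p - 1)
  simp only [hpascal, sum_add_distrib, ← mul_sum, Nat.sub_add_cancel (by omega : 1 ≤ p),
    choose_two_mul_add_eq_zero p (by omega : 0 < e + 1) (by omega),
    Nat.choose_eq_zero_of_lt (by omega : 2 * 1 < 1 + (e + 1)), Nat.cast_zero] at hshift
  rw [sumChoose, sumChoose, sumChoose]
  linear_combination hshift

-- `dvdThree (m + 2) - dvdThree (m + 1)` is the nontrivial character mod 3 evaluated at `m`.
theorem sumChoose_sub (m : ℕ) (hm : m < p) :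
    sumChoose p (p - m) = ((dvdThree (m + 2) - dvdThree (m + 1) : ℤ) : ZMod p) := by
  induction m using Nat.strong_induction_on with
  | _ m ih =>
    match m with
    | 0 => simp [sumChoose_self, dvdThree]
    | 1 => simp [sumChoose_sub_one p (Fact.out : p.Prime).two_le, dvdThree]
    | m + 2 =>
      have hrec := sumChoose_add_sumChoose_succ_add_sumChoose_add_two p (e := p - (m + 2)) (by omega) (by omega)
      rw [show p - (m + 2) + 1 = p - (m + 1) by omega, show p - (m + 2) + 2 = p - m by omega,
        ih (m + 1) (by omega) (by omega), ih m (by omega) (by omega)] at hrec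
      rw [show m + 2 + 2 = m + 1 + 3 by ring, dvdThree_add_three]
      push_cast at hrec ⊢
      linear_combination hrec

theorem mul_sum_choose_div {k : ℕ} (hk : 1 ≤ k) :
    (k : ZMod p) * ∑ i ∈ Icc 1 (p - 1), ((2 * i).choose (i + k) : ZMod p) / i =
      sumChooseOdd p (k - 1) - sumChooseOdd p k := by
  rw [sumChooseOdd, sumChooseOdd, mul_sum, ← sum_sub_distrib]
  refine sum_congr rfl fun i hi => ?_
  rw [mem_Icc] at hi
  have hi0 : (i : ZMod p) ≠ 0 := natCast_ne_zero_of_pos_of_lt (by omega) (by omega)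
  obtain ⟨a, rfl⟩ : ∃ a, i = a + 1 := ⟨i - 1, by omega⟩
  obtain ⟨b, rfl⟩ : ∃ b, k = b + 1 := ⟨k - 1, by omega⟩
  have h := congrArg (Int.cast : ℤ → ZMod p) (succ_mul_choose_two_mul_add_two a b)
  rw [show 2 * (a + 1) = 2 * a + 2 by ring, show a + 1 + (b + 1) = a + b + 2 by ring,
    show 2 * a + 2 - 1 = 2 * a + 1 by omega, Nat.add_sub_cancel,
    show a + 1 + b = a + b + 1 by ring, mul_div_assoc', div_eq_iff hi0]
  push_cast at h ⊢
  linear_combination h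

theorem sumChooseOdd_sub_one_sub_sumChooseOdd {k : ℕ} (hk : 1 ≤ k) (hkp : k < p) :
    sumChooseOdd p (k - 1) - sumChooseOdd p k = (alphaCoef p k - 1 : ℤ) := by
  obtain ⟨m, hm, rfl⟩ : ∃ m, 1 ≤ m ∧ k = p - m := ⟨p - k, by omega, by omega⟩
  induction m, hm using Nat.le_induction with
  | base =>
    have h := sumChooseOdd_add_sumChooseOdd_succ p (p - 2)
    rw [show p - 2 + 1 = p - 1 by omega, sumChooseOdd_sub_one,
      sumChoose_sub_one p (Fact.out : p.Prime).two_le] at h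
    have hpow : (-1 : ZMod p) ^ (p - 1) = 1 := ZMod.pow_card_sub_one_eq_one (by simp)
    rw [alphaCoef_eq, Nat.sub_sub_self (by omega), show p - 1 - 1 = p - 2 by omega,
      sumChooseOdd_sub_one]
    push_cast [show dvdThree 1 = 0 by decide, hpow]
    linear_combination h
  | succ m hm ih =>
    have hj : p - m = p - (m + 1) + 1 := by omega
    have hprev := sumChooseOdd_add_sumChooseOdd_succ p (p - (m + 1) - 1)
    have hnext := sumChooseOdd_add_sumChooseOdd_succ p (p - (m + 1))
    rw [Nat.sub_add_cancel (by omega), sumChoose_sub p (m + 1) (by omega),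
      show m + 1 + 2 = m + 3 by ring, show m + 1 + 1 = m + 2 by ring, dvdThree_add_three] at hprev
    rw [← hj, sumChoose_sub p m (by omega)] at hnext
    have hthree := congrArg (Int.cast : ℤ → ZMod p)
      (dvdThree_add_dvdThree_add_one_add_dvdThree_add_two m)
    have ih := ih (by omega) (by omega)
    have hsign : (-1 : ℤ) ^ (p - m) = -(-1) ^ (p - (m + 1)) := by rw [hj, pow_succ, mul_neg_one]
    rw [show p - m - 1 = p - (m + 1) by omega, alphaCoef_eq, Nat.sub_sub_self (by omega),
      hsign] at ih
    rw [alphaCoef_eq, Nat.sub_sub_self (by omega)]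
    push_cast at hprev hnext hthree ih ⊢
    linear_combination hprev - hnext - ih - 2 * hthree

end

theorem sum_binom_shift_div_general (p : ℕ) [Fact p.Prime]
    (k : ℕ) (hk1 : 1 ≤ k) (hkp : k ≤ p) :
    (∑ i ∈ Finset.Icc 1 (p - 1), ((2 * i).choose (i + k) : ZMod p) / (i : ZMod p)) =
      ((alphaCoef p k : ZMod p) - 1) / (k : ZMod p) := by
  rcases hkp.lt_or_eq with hkp | rfl
  · rw [eq_div_iff (natCast_ne_zero_of_pos_of_lt hk1 hkp), mul_comm, mul_sum_choose_div p hk1,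
      sumChooseOdd_sub_one_sub_sumChooseOdd p hk1 hkp]
    push_cast
    ring
  · -- `k = p` is zero in `ZMod p`, so the right side is `_ / 0 = 0`; every summand vanishes too.
    rw [ZMod.natCast_self, div_zero]
    exact sum_eq_zero fun i hi => by
      rw [Nat.choose_eq_zero_of_lt (by simp only [mem_Icc] at hi; omega), Nat.cast_zero, zero_div]

theorem sum_binom_shift_div (p : ℕ) [Fact p.Prime] (hp5 : 5 ≤ p)
    (k : ℕ) (hk1 : 1 ≤ k) (hkp : k ≤ p) :
    (∑ i ∈ Finset.Icc 1 (p - 1), ((2 * i).choose (i + k) : ZMod p) / (i : ZMod p)) =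
      ((alphaCoef p k : ZMod p) - 1) / (k : ZMod p) :=
  sum_binom_shift_div_general p k hk1 hkp
end
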